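/- arXiv:2408.01439 — 5 statements merged into one kernel-verified Lean document; each statement's English description precedes it below -/
import Mathlib

section
/- Let P(z) = Σ_{l=0}^{L} P_l z^l be a matrix polynomial that is unitary on the unit circle, with L ≥ 1, and let Π be the orthogonal projection onto the column space of P_L. Then the matrix polynomial Q(z) := Σ_{l=0}^{L-1} (Π P_{l+1} + (I−Π) P_l) z^l is also unitary on the unit circle, and (Π z^{-1} + (I−Π)) P(z) = Q(z) for all |z| = 1. -/
open Matrix Complex

/-- The unit circle in ℂ is infinite. -/
lemma circle_infinite : Set.Infinite {z : ℂ | ‖z‖ = 1} := by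
  have hinj : Set.InjOn (fun t : ℝ => Complex.exp (t * Complex.I))
      (Set.Ioo (-Real.pi) Real.pi) := by
    intro a ha b hb hab
    have := Complex.exp_inj_of_neg_pi_lt_of_le_pi (x := (a : ℂ) * Complex.I)
      (y := (b : ℂ) * Complex.I) (by simp [ha.1]) (by simp [ha.2.le]) (by simp [hb.1])
      (by simp [hb.2.le]) hab
    have : (a : ℂ) = b := by
      field_simp at this
      simpa using this
    exact_mod_cast this
  have hpi : (-Real.pi) < Real.pi := by
    have := Real.pi_pos; linarith
  have : ((fun t : ℝ => Complex.exp (t * Complex.I)) '' Set.Ioo (-Real.pi) Real.pi).Infinite :=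
    (Set.Ioo_infinite hpi).image hinj
  refine this.mono ?_
  rintro z ⟨t, _, rfl⟩
  simp [Complex.norm_exp_ofReal_mul_I t]

lemma conj_eq_inv {z : ℂ} (hz : ‖z‖ = 1) : (starRingEnd ℂ) z = z⁻¹ := by
  have h : (starRingEnd ℂ) z * z = 1 := by
    rw [mul_comm, Complex.mul_conj, Complex.normSq_eq_norm_sq, hz]
    norm_num
  exact eq_inv_of_mul_eq_one_left h

/-- If the range of `A` (as a linear map) is contained in the range of `B`, then `A = B * X`. -/
lemma exists_right_factor {n : ℕ} {A B : Matrix (Fin n) (Fin n) ℂ}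
    (h : LinearMap.range A.mulVecLin ≤ LinearMap.range B.mulVecLin) :
    ∃ X : Matrix (Fin n) (Fin n) ℂ, B * X = A := by
  have hcol : ∀ j : Fin n, ∃ v : Fin n → ℂ, B.mulVec v = A.mulVec (Pi.single j 1) :=
    fun j => h ⟨Pi.single j 1, rfl⟩
  choose v hv using hcol
  refine ⟨Matrix.of fun i j => v j i, ?_⟩
  ext i j
  have := congrFun (hv j) i
  simp only [Matrix.mulVec_single_one] at this
  simpa [Matrix.mul_apply, Matrix.mulVec, dotProduct] using this

/-- Stripping one degree off a matrix polynomial that is unitary on the unit circle: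
if `Π` is the orthogonal projection onto the column space of the leading coefficient `P_L`,
then `Q(z) := Σ_{l<L} (Π P_{l+1} + (I−Π) P_l) z^l` is unitary on the unit circle and
`(Π z⁻¹ + (I−Π)) P(z) = Q(z)` for `|z| = 1`. -/
theorem stmt_1 {N L : ℕ} (hL : 1 ≤ L) (P : Fin (L + 1) → Matrix (Fin N) (Fin N) ℂ)
    (hunit : ∀ z : ℂ, ‖z‖ = 1 →
      (∑ l : Fin (L + 1), z ^ (l : ℕ) • P l)ᴴ * (∑ l : Fin (L + 1), z ^ (l : ℕ) • P l) = 1)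
    (Pi : Matrix (Fin N) (Fin N) ℂ)
    (hproj : Piᴴ = Pi ∧ Pi * Pi = Pi)
    (hrange : LinearMap.range Pi.mulVecLin = LinearMap.range (P (Fin.last L)).mulVecLin) :
    (∀ z : ℂ, ‖z‖ = 1 →
      (∑ l : Fin L, z ^ (l : ℕ) • (Pi * P l.succ + (1 - Pi) * P l.castSucc))ᴴ *
        (∑ l : Fin L, z ^ (l : ℕ) • (Pi * P l.succ + (1 - Pi) * P l.castSucc)) = 1) ∧
    (∀ z : ℂ, ‖z‖ = 1 →
      (z⁻¹ • Pi + (1 - Pi)) * (∑ l : Fin (L + 1), z ^ (l : ℕ) • P l) =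
        ∑ l : Fin L, z ^ (l : ℕ) • (Pi * P l.succ + (1 - Pi) * P l.castSucc)) := by
  obtain ⟨hherm, hidem⟩ := hproj
  -- expand the unitarity hypothesis into a double sum
  have hexp : ∀ z : ℂ, ‖z‖ = 1 →
      ∑ k : Fin (L + 1), ∑ l : Fin (L + 1),
        ((starRingEnd ℂ) z ^ (k : ℕ) * z ^ (l : ℕ)) • ((P k)ᴴ * P l) = 1 := by
    intro z hz
    have := hunit z hz
    rw [Matrix.conjTranspose_sum] at this
    rw [Finset.sum_mul_sum] at this
    calc ∑ k : Fin (L + 1), ∑ l : Fin (L + 1),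
          ((starRingEnd ℂ) z ^ (k : ℕ) * z ^ (l : ℕ)) • ((P k)ᴴ * P l)
        = ∑ k : Fin (L + 1), ∑ l : Fin (L + 1),
          (z ^ (k : ℕ) • P k)ᴴ * (z ^ (l : ℕ) • P l) := by
          refine Finset.sum_congr rfl fun k _ => Finset.sum_congr rfl fun l _ => ?_
          rw [Matrix.conjTranspose_smul]
          rw [Matrix.smul_mul, Matrix.mul_smul, smul_smul]
          simp [RCLike.star_def, mul_comm]
      _ = 1 := this
  -- key orthogonality: P_0ᴴ P_L = 0
  have hkey : (P 0)ᴴ * P (Fin.last L) = 0 := by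
    ext i j
    -- polynomial that vanishes on the unit circle
    set q : Polynomial ℂ :=
      (∑ k : Fin (L + 1), ∑ l : Fin (L + 1),
        Polynomial.C (((P k)ᴴ * P l) i j) * Polynomial.X ^ (L - (k : ℕ) + (l : ℕ))) -
      Polynomial.C ((1 : Matrix (Fin N) (Fin N) ℂ) i j) * Polynomial.X ^ L with hq
    have hroot : ∀ z : ℂ, ‖z‖ = 1 → q.IsRoot z := by
      intro z hz
      have hz0 : z ≠ 0 := by
        intro h; rw [h] at hz; simp at hz
      have hzinv : (starRingEnd ℂ) z = z⁻¹ := conj_eq_inv hz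
      have h1 := congrFun (congrFun (hexp z hz) i) j
      simp only [Matrix.sum_apply, Matrix.smul_apply, Matrix.one_apply, smul_eq_mul] at h1
      have hpow : ∀ k l : Fin (L + 1),
          z ^ (L - (k : ℕ) + (l : ℕ)) = z ^ L * ((starRingEnd ℂ) z ^ (k : ℕ) * z ^ (l : ℕ)) := by
        intro k l
        rw [hzinv, inv_pow, pow_add]
        have hk : (k : ℕ) ≤ L := Nat.lt_succ_iff.mp k.isLt
        rw [eq_comm, mul_comm ((z ^ (k:ℕ))⁻¹) (z ^ (l:ℕ)), ← mul_assoc, mul_assoc (z^L)]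
        rw [mul_comm (z ^ (l:ℕ))]
        rw [← mul_assoc]
        congr 1
        field_simp
        rw [← pow_add]
        congr 1
        omega
      simp only [Polynomial.IsRoot, hq, Polynomial.eval_sub, Polynomial.eval_finset_sum,
        Polynomial.eval_mul, Polynomial.eval_C, Polynomial.eval_pow, Polynomial.eval_X]
      have : ∑ k : Fin (L + 1), ∑ l : Fin (L + 1),
          ((P k)ᴴ * P l) i j * z ^ (L - (k : ℕ) + (l : ℕ)) =
          z ^ L * ∑ k : Fin (L + 1), ∑ l : Fin (L + 1),
            ((starRingEnd ℂ) z ^ (k : ℕ) * z ^ (l : ℕ)) * ((P k)ᴴ * P l) i j := by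
        rw [Finset.mul_sum]
        refine Finset.sum_congr rfl fun k _ => ?_
        rw [Finset.mul_sum]
        refine Finset.sum_congr rfl fun l _ => ?_
        rw [hpow k l]; ring
      rw [this, h1]
      simp [Matrix.one_apply]
    have hq0 : q = 0 := by
      apply Polynomial.eq_zero_of_infinite_isRoot
      exact circle_infinite.mono fun z hz => hroot z hz
    have hcoeff := congrArg (fun p => Polynomial.coeff p (2 * L)) hq0
    rw [hq] at hcoeff
    simp only [Polynomial.coeff_zero, Polynomial.coeff_sub, Polynomial.finset_sum_coeff,
      Polynomial.coeff_C_mul, Polynomial.coeff_X_pow] at hcoeff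
    have hLne : ¬ (2 * L = L) := by omega
    have hcond : ∀ k l : Fin (L + 1),
        (2 * L = L - (k : ℕ) + (l : ℕ)) ↔ (k = 0 ∧ l = Fin.last L) := by
      intro k l
      have hk : (k : ℕ) < L + 1 := k.isLt
      have hl : (l : ℕ) < L + 1 := l.isLt
      simp only [Fin.ext_iff, Fin.val_zero, Fin.val_last]
      omega
    have : ∑ k : Fin (L + 1), ∑ l : Fin (L + 1),
        (((P k)ᴴ * P l) i j) * (if 2 * L = L - (k : ℕ) + (l : ℕ) then (1:ℂ) else 0) =
        ((P 0)ᴴ * P (Fin.last L)) i j := by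
      have : ∀ k l : Fin (L + 1),
          (((P k)ᴴ * P l) i j) * (if 2 * L = L - (k : ℕ) + (l : ℕ) then (1:ℂ) else 0) =
          if k = 0 then (if l = Fin.last L then ((P k)ᴴ * P l) i j else 0) else 0 := by
        intro k l
        simp only [hcond]
        by_cases h1 : k = 0 <;> by_cases h2 : l = Fin.last L <;> simp [h1, h2]
      simp only [this]
      have h0 : ∀ x : Fin (L + 1),
          (∑ x1 : Fin (L + 1), if x = 0 then
            (if x1 = Fin.last L then ((P x)ᴴ * P x1) i j else 0) else 0) =
          if x = 0 then ((P x)ᴴ * P (Fin.last L)) i j else 0 := by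
        intro x
        by_cases hx : x = 0
        · rw [if_pos hx]
          simp only [hx, if_pos]
          rw [Fintype.sum_ite_eq']
        · simp [hx]
      simp only [h0]
      rw [Fintype.sum_ite_eq']
    simp only [if_neg hLne, mul_zero, sub_zero] at hcoeff
    rw [this] at hcoeff
    simpa using hcoeff
  -- hence P_Lᴴ P_0 = 0
  have hkey' : (P (Fin.last L))ᴴ * P 0 = 0 := by
    have := congrArg Matrix.conjTranspose hkey
    simpa [Matrix.conjTranspose_mul] using this
  -- Pi * P 0 = 0
  obtain ⟨X, hX⟩ := exists_right_factor (A := Pi) (B := P (Fin.last L)) (le_of_eq hrange)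
  have hPiP0 : Pi * P 0 = 0 := by
    have : Pi = Xᴴ * (P (Fin.last L))ᴴ := by
      rw [← Matrix.conjTranspose_mul, hX, hherm]
    rw [this, Matrix.mul_assoc, hkey', Matrix.mul_zero]
  -- (1 - Pi) * P_L = 0
  obtain ⟨Y, hY⟩ := exists_right_factor (A := P (Fin.last L)) (B := Pi) (le_of_eq hrange.symm)
  have hPiPL : (1 - Pi) * P (Fin.last L) = 0 := by
    rw [← hY, ← Matrix.mul_assoc, Matrix.sub_mul, Matrix.one_mul, hidem, sub_self,
      Matrix.zero_mul]
  -- the algebraic identity (second goal)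
  have hmain : ∀ z : ℂ, ‖z‖ = 1 →
      (z⁻¹ • Pi + (1 - Pi)) * (∑ l : Fin (L + 1), z ^ (l : ℕ) • P l) =
        ∑ l : Fin L, z ^ (l : ℕ) • (Pi * P l.succ + (1 - Pi) * P l.castSucc) := by
    intro z hz
    have hz0 : z ≠ 0 := by intro h; rw [h] at hz; simp at hz
    rw [Matrix.add_mul, Matrix.smul_mul, Finset.mul_sum, Finset.mul_sum]
    have h1 : z⁻¹ • ∑ l : Fin (L + 1), Pi * (z ^ (l : ℕ) • P l) =
        ∑ l : Fin L, z ^ (l : ℕ) • (Pi * P l.succ) := by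
      rw [Fin.sum_univ_succ]
      simp only [Fin.val_zero, pow_zero, one_smul]
      rw [hPiP0]
      simp only [zero_add, Finset.smul_sum]
      refine Finset.sum_congr rfl fun l _ => ?_
      rw [Matrix.mul_smul, smul_smul]
      congr 1
      rw [Fin.val_succ, pow_succ]
      field_simp
    have h2 : ∑ l : Fin (L + 1), (1 - Pi) * (z ^ (l : ℕ) • P l) =
        ∑ l : Fin L, z ^ (l : ℕ) • ((1 - Pi) * P l.castSucc) := by
      rw [Fin.sum_univ_castSucc]
      rw [Matrix.mul_smul, hPiPL, smul_zero, add_zero]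
      refine Finset.sum_congr rfl fun l _ => ?_
      rw [Matrix.mul_smul, Fin.coe_castSucc]
    rw [h1, h2, ← Finset.sum_add_distrib]
    refine Finset.sum_congr rfl fun l _ => ?_
    rw [smul_add]
  refine ⟨?_, hmain⟩
  intro z hz
  have hz0 : z ≠ 0 := by intro h; rw [h] at hz; simp at hz
  have hzinv : (starRingEnd ℂ) z = z⁻¹ := conj_eq_inv hz
  set C : Matrix (Fin N) (Fin N) ℂ := z⁻¹ • Pi + (1 - Pi) with hC
  have hCC : Cᴴ * C = 1 := by
    have hCH : Cᴴ = (starRingEnd ℂ) z⁻¹ • Pi + (1 - Pi) := by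
      rw [hC, Matrix.conjTranspose_add, Matrix.conjTranspose_smul, hherm,
        Matrix.conjTranspose_sub, Matrix.conjTranspose_one, hherm]
      simp [RCLike.star_def]
    rw [hCH, hC]
    rw [Matrix.add_mul, Matrix.mul_add, Matrix.mul_add, Matrix.smul_mul, Matrix.smul_mul,
      Matrix.mul_smul, Matrix.mul_smul]
    have hPi1 : Pi * (1 - Pi) = 0 := by
      rw [Matrix.mul_sub, Matrix.mul_one, hidem, sub_self]
    have h1Pi : (1 - Pi) * Pi = 0 := by
      rw [Matrix.sub_mul, Matrix.one_mul, hidem, sub_self]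
    have h11 : (1 - Pi) * (1 - Pi) = 1 - Pi := by
      rw [Matrix.sub_mul, Matrix.one_mul, Matrix.mul_sub, Matrix.mul_one, hidem]
      abel
    rw [hidem, hPi1, h1Pi, h11, smul_zero, smul_zero]
    have hsc : (starRingEnd ℂ) z⁻¹ • z⁻¹ • Pi = Pi := by
      rw [smul_smul]
      have : (starRingEnd ℂ) z⁻¹ * z⁻¹ = 1 := by
        rw [map_inv₀, hzinv, inv_inv]
        exact mul_inv_cancel₀ hz0
      rw [this, one_smul]
    rw [hsc]
    simp only [add_zero, zero_add]
    abel
  have hQ := hmain z hz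
  rw [← hQ]
  rw [Matrix.conjTranspose_mul, Matrix.mul_assoc, ← Matrix.mul_assoc Cᴴ, ← hC, hCC,
    Matrix.one_mul]
  exact hunit z hz
end

section
/- Let P(z) be a matrix polynomial that is unitary for all z on the unit circle. Then P(z) can be written as a product V_0 · Π_{k=1}^{L} (Π_k z + (I − Π_k)), where V_0 is a constant unitary matrix and each Π_k is an orthogonal projection, with L equal to the degree of P. -/
open Matrix Complex
open ComplexConjugate

/-!
Since `P(z)ᴴ P(z) = 1` on the unit circle, also `P(z) P(z)ᴴ = 1` there. Multiplied by `z ^ L`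
(and using `conj z = z⁻¹`), this says that a polynomial of degree `2L` with top coefficient
`P_L P_0ᴴ` agrees with `z ^ L` on the circle, hence `P_L P_0ᴴ = 0`: the range of `P_0ᴴ` lies in
`ker P_L`. So the orthogonal projection `Π` onto `(ker P_L)ᗮ` satisfies `P_L Π = P_L` and
`P_0 Π = 0`, which makes `P(z) = Q(z) (z Π + (1 - Π))` with `Q_l = P_{l+1} Π + P_l (1 - Π)` of
degree `L - 1`. The factor `z Π + (1 - Π)` is unitary on the circle, so `Q` is again unitary
there, and induction on `L` peels off one factor at a time, down to a constant unitary `V₀`.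
-/

theorem Complex.infinite_sphere (x : ℂ) {r : ℝ} (hr : 0 < r) : (Metric.sphere x r).Infinite :=
  (isPreconnected_sphere (by simp [Complex.rank_real_complex]) x r).infinite_of_nontrivial
    ⟨x + r, by simp [hr.le], x - r, by simp [hr.le], fun h => by
      have := congrArg re h
      simp only [add_re, sub_re, ofReal_re] at this
      linarith⟩

theorem Complex.conj_mul_eq_one_of_norm_eq_one {z : ℂ} (hz : ‖z‖ = 1) : conj z * z = 1 := by
  rw [Complex.conj_mul', hz]
  simp

theorem Complex.pow_sub_eq_pow_mul_conj_pow {z : ℂ} (hz : ‖z‖ = 1) {m n : ℕ}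
    (hmn : m ≤ n) : z ^ (n - m) = z ^ n * conj z ^ m := by
  calc z ^ (n - m) = z ^ (n - m) * (conj z * z) ^ m := by
        rw [conj_mul_eq_one_of_norm_eq_one hz, one_pow, mul_one]
    _ = z ^ n * conj z ^ m := by rw [mul_pow, ← pow_sub_mul_pow z hmn]; ring

open Polynomial in
theorem Complex.coeff_last_zero_eq_zero_of_sum_pow_mul_conj_pow_eq_const {L : ℕ} (hL : 0 < L)
    (c : Fin (L + 1) → Fin (L + 1) → ℂ) (a : ℂ)
    (h : ∀ z : ℂ, ‖z‖ = 1 →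
      ∑ l : Fin (L + 1), ∑ m : Fin (L + 1), z ^ (l : ℕ) * conj z ^ (m : ℕ) * c l m = a) :
    c (Fin.last L) 0 = 0 := by
  -- on the circle `p` evaluates to `z ^ L * a`, as `z ^ (L - m) = z ^ L * conj z ^ m` for `m ≤ L`
  set p : ℂ[X] := ∑ l : Fin (L + 1), ∑ m : Fin (L + 1), C (c l m) * X ^ ((l : ℕ) + (L - m))
  have hp : p = C a * X ^ L := by
    refine eq_of_infinite_eval_eq _ _ ((Complex.infinite_sphere 0 one_pos).mono fun z hz => ?_)
    rw [mem_sphere_zero_iff_norm] at hz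
    simp only [Set.mem_ofPred_eq, p, eval_finsetSum, eval_mul, eval_C, eval_pow, eval_X, pow_add,
      ← h z hz, Finset.sum_mul]
    refine Finset.sum_congr rfl fun l _ => Finset.sum_congr rfl fun m _ => ?_
    rw [pow_sub_eq_pow_mul_conj_pow hz (Nat.lt_succ_iff.mp m.isLt)]
    ring
  have hcoeff := congrArg (coeff · (2 * L)) hp
  simp only [p, finsetSum_coeff, coeff_C_mul_X_pow, ← Fintype.sum_prod_type'] at hcoeff
  rw [Fintype.sum_eq_single (Fin.last L, 0), if_pos (by simp; omega), if_neg (by omega)] at hcoeff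
  · exact hcoeff
  · rintro ⟨l, m⟩ hlm
    refine if_neg fun h => hlm ?_
    have := l.isLt
    have := m.isLt
    simp only [Prod.mk.injEq, Fin.ext_iff, Fin.val_last, Fin.val_zero] at h ⊢
    omega

section
variable {𝕜 E : Type*} [RCLike 𝕜] [NormedAddCommGroup E] [InnerProductSpace 𝕜 E]
  [CompleteSpace E]

theorem ContinuousLinearMap.exists_isStarProjection_mul_eq_self_and_mul_eq_zero
    {a b : E →L[𝕜] E} (h : a * star b = 0) :
    ∃ p : E →L[𝕜] E, IsStarProjection p ∧ a * p = a ∧ b * p = 0 := by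
  set K := a.kerᗮ
  have hKK : Kᗮ = a.ker :=
    (Submodule.orthogonal_orthogonal_eq_closure _).trans
      a.isClosed_ker.submodule_topologicalClosure_eq
  refine ⟨K.starProjection, isStarProjection_starProjection, ?_, ?_⟩
  · ext x
    have := K.sub_starProjection_mem_orthogonal x
    rw [hKK, LinearMap.mem_ker, map_sub, sub_eq_zero] at this
    exact this.symm
  · suffices K.starProjection * star b = 0 by
      simpa [star_mul, (isSelfAdjoint_starProjection K).star_eq] using congrArg star this
    ext x
    have : star b x ∈ Kᗮ := by
      rw [hKK, LinearMap.mem_ker]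
      exact congrArg (· x) h
    simpa using K.starProjection_apply_eq_zero_iff.mpr this
end

theorem Matrix.exists_isStarProjection_mul_eq_self_and_mul_eq_zero {𝕜 n : Type*} [RCLike 𝕜]
    [Fintype n] [DecidableEq n] {A B : Matrix n n 𝕜} (h : A * Bᴴ = 0) :
    ∃ p : Matrix n n 𝕜, IsStarProjection p ∧ A * p = A ∧ B * p = 0 := by
  let T := Matrix.toEuclideanCLM (n := n) (𝕜 := 𝕜)
  obtain ⟨p, hp, hAp, hBp⟩ :=
    ContinuousLinearMap.exists_isStarProjection_mul_eq_self_and_mul_eq_zero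
      (a := T A) (b := T B) (by rw [← map_star, ← map_mul, star_eq_conjTranspose, h, map_zero])
  refine ⟨T.symm p, ⟨hp.isIdempotentElem.map T.symm, hp.isSelfAdjoint.map T.symm⟩, ?_, ?_⟩
  · simpa using congrArg T.symm hAp
  · simpa using congrArg T.symm hBp

section
variable {R S : Type*} [CommRing R] [Ring S] [Algebra R S] {p : S}

theorem IsIdempotentElem.smul_add_one_sub_mul_smul_add_one_sub (hp : IsIdempotentElem p)
    (a b : R) : (a • p + (1 - p)) * (b • p + (1 - p)) = (a * b) • p + (1 - p) := by
  simp only [add_mul, mul_add, mul_smul_comm, smul_mul_assoc, smul_smul, hp.eq,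
    hp.mul_one_sub_self, hp.one_sub_mul_self, hp.one_sub.eq, smul_zero, add_zero, zero_add]
  rw [mul_comm]

theorem IsIdempotentElem.mul_smul_add_one_sub (hp : IsIdempotentElem p) (x y : S) (z : R) :
    (x * p + y * (1 - p)) * (z • p + (1 - p)) = z • (x * p) + y * (1 - p) := by
  simp only [add_mul, mul_add, mul_smul_comm, mul_assoc, hp.eq, hp.mul_one_sub_self,
    hp.one_sub_mul_self, hp.one_sub.eq, mul_zero, add_zero, zero_add]

theorem IsIdempotentElem.sum_smul_mul_smul_add_one_sub (hp : IsIdempotentElem p) {D : ℕ}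
    {P : Fin (D + 2) → S} (hlast : P (Fin.last (D + 1)) * p = P (Fin.last (D + 1)))
    (hzero : P 0 * p = 0) (z : R) :
    (∑ l : Fin (D + 1), z ^ (l : ℕ) • (P l.succ * p + P l.castSucc * (1 - p))) *
        (z • p + (1 - p)) = ∑ l : Fin (D + 2), z ^ (l : ℕ) • P l := by
  have hlast' : P (Fin.last (D + 1)) * (1 - p) = 0 := by rw [mul_sub, mul_one, hlast, sub_self]
  calc _ = ∑ l : Fin (D + 1), (z ^ ((l : ℕ) + 1) • (P l.succ * p) +
        z ^ (l : ℕ) • (P l.castSucc * (1 - p))) := by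
        rw [Finset.sum_mul]
        refine Finset.sum_congr rfl fun l _ => ?_
        rw [smul_mul_assoc, hp.mul_smul_add_one_sub, smul_add, smul_smul, pow_succ]
    _ = ∑ l : Fin (D + 2), (z ^ (l : ℕ) • (P l * p) + z ^ (l : ℕ) • (P l * (1 - p))) := by
        rw [Finset.sum_add_distrib, Finset.sum_add_distrib,
          Fin.sum_univ_succ (f := fun l : Fin (D + 2) => z ^ (l : ℕ) • (P l * p)),
          Fin.sum_univ_castSucc (f := fun l : Fin (D + 2) => z ^ (l : ℕ) • (P l * (1 - p)))]
        simp [hzero, hlast']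
    _ = _ := by simp only [← smul_add, ← mul_add, add_sub_cancel, mul_one]
end

theorem IsStarProjection.smul_add_one_sub_mem_unitary {A : Type*} [Ring A] [StarRing A]
    [Algebra ℂ A] [StarModule ℂ A] {p : A} (hp : IsStarProjection p) {z : ℂ}
    (hz : ‖z‖ = 1) : z • p + (1 - p) ∈ unitary A := by
  have hstar : star (z • p + (1 - p)) = conj z • p + (1 - p) := by
    simp [hp.isSelfAdjoint.star_eq]
  rw [Unitary.mem_iff, hstar, hp.isIdempotentElem.smul_add_one_sub_mul_smul_add_one_sub,
    hp.isIdempotentElem.smul_add_one_sub_mul_smul_add_one_sub, mul_comm z,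
    conj_mul_eq_one_of_norm_eq_one hz]
  simp

theorem Matrix.sum_smul_mul_conjTranspose_sum_smul {n : Type*} [Fintype n] {L : ℕ}
    (P : Fin (L + 1) → Matrix n n ℂ) (z : ℂ) :
    (∑ l : Fin (L + 1), z ^ (l : ℕ) • P l) * (∑ l : Fin (L + 1), z ^ (l : ℕ) • P l)ᴴ =
      ∑ l : Fin (L + 1), ∑ m : Fin (L + 1),
        (z ^ (l : ℕ) * conj z ^ (m : ℕ)) • (P l * (P m)ᴴ) := by
  simp only [conjTranspose_sum, conjTranspose_smul, Finset.sum_mul_sum, smul_mul_smul_comm,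
    star_pow, Complex.star_def]

theorem Matrix.last_mul_conjTranspose_zero_eq_zero_of_unitary_on_circle {n : Type*} [Fintype n]
    [DecidableEq n] {L : ℕ} (hL : 0 < L) (P : Fin (L + 1) → Matrix n n ℂ)
    (hunit : ∀ z : ℂ, ‖z‖ = 1 →
      (∑ l : Fin (L + 1), z ^ (l : ℕ) • P l)ᴴ *
        (∑ l : Fin (L + 1), z ^ (l : ℕ) • P l) = 1) :
    P (Fin.last L) * (P 0)ᴴ = 0 := by
  ext i j
  refine Complex.coeff_last_zero_eq_zero_of_sum_pow_mul_conj_pow_eq_const hL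
    (fun l m => (P l * (P m)ᴴ) i j) ((1 : Matrix n n ℂ) i j) fun z hz => ?_
  rw [← mul_eq_one_comm.mp (hunit z hz), sum_smul_mul_conjTranspose_sum_smul]
  simp only [sum_apply, smul_apply, smul_eq_mul]

theorem Matrix.exists_projection_factor_of_unitary_on_circle {n : Type*} [Fintype n]
    [DecidableEq n] {D : ℕ} (P : Fin (D + 2) → Matrix n n ℂ)
    (hunit : ∀ z : ℂ, ‖z‖ = 1 →
      (∑ l : Fin (D + 2), z ^ (l : ℕ) • P l)ᴴ *
        (∑ l : Fin (D + 2), z ^ (l : ℕ) • P l) = 1) :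
    ∃ (Q : Fin (D + 1) → Matrix n n ℂ) (p : Matrix n n ℂ), IsStarProjection p ∧
      (∀ z : ℂ, ‖z‖ = 1 →
        (∑ l : Fin (D + 1), z ^ (l : ℕ) • Q l)ᴴ *
          (∑ l : Fin (D + 1), z ^ (l : ℕ) • Q l) = 1) ∧
      ∀ z : ℂ, ∑ l : Fin (D + 2), z ^ (l : ℕ) • P l =
        (∑ l : Fin (D + 1), z ^ (l : ℕ) • Q l) * (z • p + (1 - p)) := by
  obtain ⟨p, hp, hlast, hzero⟩ := exists_isStarProjection_mul_eq_self_and_mul_eq_zero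
    (last_mul_conjTranspose_zero_eq_zero_of_unitary_on_circle D.succ_pos P hunit)
  have hfactor := hp.isIdempotentElem.sum_smul_mul_smul_add_one_sub (R := ℂ) hlast hzero
  refine ⟨_, p, hp, fun z hz => ?_, fun z => (hfactor z).symm⟩
  have hW : z • p + (1 - p) ∈ unitary (Matrix n n ℂ) := hp.smul_add_one_sub_mem_unitary hz
  have hQz : ∑ l : Fin (D + 1), z ^ (l : ℕ) • (P l.succ * p + P l.castSucc * (1 - p)) =
      (∑ l : Fin (D + 2), z ^ (l : ℕ) • P l) * star (z • p + (1 - p)) := by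
    rw [← hfactor z, mul_assoc, Unitary.mul_star_self_of_mem hW, mul_one]
  rw [hQz, ← star_eq_conjTranspose, star_mul, star_star, mul_assoc, ← mul_assoc (star _),
    star_eq_conjTranspose, hunit z hz, one_mul, Unitary.mul_star_self_of_mem hW]

/-- Factorization of matrix polynomials unitary on the unit circle:
`P(z) = V₀ · ∏_{k=1}^{L} (Π_k z + (I − Π_k))` with `V₀` unitary and each `Π_k`
an orthogonal projection. -/
theorem stmt_2 {N L : ℕ} (P : Fin (L + 1) → Matrix (Fin N) (Fin N) ℂ)
    (hunit : ∀ z : ℂ, ‖z‖ = 1 →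
      (∑ l : Fin (L + 1), z ^ (l : ℕ) • P l)ᴴ * (∑ l : Fin (L + 1), z ^ (l : ℕ) • P l) = 1) :
    ∃ (V₀ : Matrix (Fin N) (Fin N) ℂ) (Pi : Fin L → Matrix (Fin N) (Fin N) ℂ),
      V₀ ∈ Matrix.unitaryGroup (Fin N) ℂ ∧
      (∀ k, (Pi k)ᴴ = Pi k ∧ Pi k * Pi k = Pi k) ∧
      ∀ z : ℂ, ‖z‖ = 1 →
        ∑ l : Fin (L + 1), z ^ (l : ℕ) • P l =
          V₀ * (List.ofFn (fun k : Fin L => z • Pi k + (1 - Pi k))).prod := by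
  induction L with
  | zero =>
    refine ⟨P 0, Fin.elim0, ?_, fun k => k.elim0, fun z _ => by simp⟩
    simpa [mem_unitaryGroup_iff', star_eq_conjTranspose] using hunit 1 (by simp)
  | succ D ih =>
    obtain ⟨Q, p, hp, hQ, hPQ⟩ := exists_projection_factor_of_unitary_on_circle P hunit
    obtain ⟨V₀, Pi, hV₀, hPi, hQV₀⟩ := ih Q hQ
    refine ⟨V₀, Fin.snoc Pi p, hV₀, fun k => ?_, fun z hz => ?_⟩
    · cases k using Fin.lastCases with
      | last => simpa using ⟨hp.isSelfAdjoint.star_eq, hp.isIdempotentElem.eq⟩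
      | cast k => simpa using hPi k
    · rw [hPQ, hQV₀ z hz, List.ofFn_succ', List.prod_concat, mul_assoc]
      simp
end

section
/- There exists a bivariate function F(w,v) = 1 − (2 − w − w^{-1})(2 − v − v^{-1})/16 on the unit torus {|w| = |v| = 1} with |F(w,v)| ≤ 1 everywhere, |F(w,v)| = 1 whenever w = 1 or v = 1, that cannot be written as F(w,v) = Σ_j p_j(w) q_j(v) for Laurent polynomials p_j, q_j with Σ_j |p_j(w)|² ≤ 1 and Σ_j |q_j(v)|² ≤ 1 for all |w| = |v| = 1. -/
/-! On the torus `F(w,v) = 1 − (1 − Re w)(1 − Re v)/4`, which is real with values in `[0, 1]`.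
If `F = Σ_j p_j(w) q_j(v)` with both families in the closed unit ball of `ℂⁿ`, then along
`v = 1` the identity `Σ_j p_j(w) q_j(1) = 1` is an equality case of Cauchy–Schwarz, so
`p_j(w) = conj (q_j(1))` for every unimodular `w`. Hence `F(w,v)` would not depend on `w`,
but `F(1,-1) = 1` while `F(-1,-1) = 0`. -/

open Complex

noncomputable def Fcounter (w v : ℂ) : ℂ :=
  1 - (2 - w - w⁻¹) * (2 - v - v⁻¹) / 16

open ComplexConjugate Finset

lemma Fcounter_one_left (v : ℂ) : Fcounter 1 v = 1 := by
  norm_num [Fcounter]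

lemma Fcounter_one_right (w : ℂ) : Fcounter w 1 = 1 := by
  norm_num [Fcounter]

lemma Fcounter_eq_ofReal {w v : ℂ} (hw : ‖w‖ = 1) (hv : ‖v‖ = 1) :
    Fcounter w v = ((1 - (1 - w.re) * (1 - v.re) / 4 : ℝ) : ℂ) := by
  rw [Fcounter, inv_eq_conj hw, inv_eq_conj hv, sub_sub, sub_sub, add_conj, add_conj]
  push_cast
  ring

lemma norm_Fcounter_le_one {w v : ℂ} (hw : ‖w‖ = 1) (hv : ‖v‖ = 1) : ‖Fcounter w v‖ ≤ 1 := by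
  have hw' := abs_le.1 (hw ▸ abs_re_le_norm w)
  have hv' := abs_le.1 (hv ▸ abs_re_le_norm v)
  rw [Fcounter_eq_ofReal hw hv, norm_real, Real.norm_eq_abs, abs_le]
  constructor <;> nlinarith

lemma Complex.eq_conj_of_sum_mul_eq_one {ι : Type*} [Fintype ι] {a b : ι → ℂ}
    (ha : ∑ i, ‖a i‖ ^ 2 ≤ 1) (hb : ∑ i, ‖b i‖ ^ 2 ≤ 1) (hab : ∑ i, a i * b i = 1) (j : ι) :
    a j = conj (b j) := by
  have hterm (i : ι) :
      ‖a i - conj (b i)‖ ^ 2 = ‖a i‖ ^ 2 + ‖b i‖ ^ 2 - 2 * (a i * b i).re := by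
    simp only [Complex.sq_norm, normSq_sub, normSq_conj, conj_conj]
  have hre : ∑ i, (a i * b i).re = 1 := by rw [← re_sum, hab, one_re]
  have hsum : ∑ i, ‖a i - conj (b i)‖ ^ 2 ≤ 0 := by
    simp only [hterm, sum_sub_distrib, sum_add_distrib, ← mul_sum, hre]
    linarith
  have hj := (sum_eq_zero_iff_of_nonneg fun i _ => by positivity).1
    (le_antisymm hsum (by positivity)) j (mem_univ j)
  simpa [sub_eq_zero] using hj

/-- The counterexample: `F(w,v) = 1 − (2 − w − w⁻¹)(2 − v − v⁻¹)/16` is bounded by `1` in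
modulus on the unit torus, has modulus `1` whenever `w = 1` or `v = 1`, but cannot be
written as `Σ_j p_j(w) q_j(v)` with Laurent polynomials satisfying `Σ_j |p_j(w)|² ≤ 1`
and `Σ_j |q_j(v)|² ≤ 1` on the unit circle. -/
theorem stmt_11 :
    (∀ w v : ℂ, ‖w‖ = 1 → ‖v‖ = 1 → ‖Fcounter w v‖ ≤ 1) ∧
    (∀ w v : ℂ, ‖w‖ = 1 → ‖v‖ = 1 → (w = 1 ∨ v = 1) →
      ‖Fcounter w v‖ = 1) ∧
    ¬ ∃ (n : ℕ) (p q : Fin n → ℂ → ℂ),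
        (∀ j, ∃ (d : ℕ) (c : ℤ → ℂ), ∀ z : ℂ, z ≠ 0 →
          p j z = ∑ s ∈ Finset.Icc (-(d : ℤ)) (d : ℤ), c s * z ^ s) ∧
        (∀ j, ∃ (d : ℕ) (c : ℤ → ℂ), ∀ z : ℂ, z ≠ 0 →
          q j z = ∑ s ∈ Finset.Icc (-(d : ℤ)) (d : ℤ), c s * z ^ s) ∧
        (∀ w : ℂ, ‖w‖ = 1 → ∑ j, ‖p j w‖ ^ 2 ≤ 1) ∧
        (∀ v : ℂ, ‖v‖ = 1 → ∑ j, ‖q j v‖ ^ 2 ≤ 1) ∧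
        (∀ w v : ℂ, ‖w‖ = 1 → ‖v‖ = 1 →
          Fcounter w v = ∑ j, p j w * q j v) := by
  refine ⟨fun w v hw hv => norm_Fcounter_le_one hw hv, ?_, ?_⟩
  · rintro w v - - (rfl | rfl) <;> simp [Fcounter_one_left, Fcounter_one_right]
  · rintro ⟨n, p, q, -, -, hp, hq, hF⟩
    have h1 : ‖(1 : ℂ)‖ = 1 := norm_one
    have hm1 : ‖(-1 : ℂ)‖ = 1 := by simp
    have hp_eq (w : ℂ) (hw : ‖w‖ = 1) (j : Fin n) : p j w = conj (q j 1) :=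
      eq_conj_of_sum_mul_eq_one (hp w hw) (hq 1 h1) (by rw [← hF w 1 hw h1, Fcounter_one_right]) j
    have hF_eq : Fcounter 1 (-1) = Fcounter (-1) (-1) := by
      simp only [hF _ _ h1 hm1, hF _ _ hm1 hm1, hp_eq 1 h1, hp_eq (-1) hm1]
    norm_num [Fcounter] at hF_eq
end

section
/- Let P(x) be a real polynomial of degree at most N that is nonnegative on [0,1]. Then there exist complex numbers A_0, ..., A_N such that P(cos²(θ/2)) = |Σ_{k=0}^{N} A_k e^{ikθ}|² for all real θ. -/
/-!
With `z = e^{iθ}` one has `4 z cos²(θ/2) = (z + 1)²`, so for every `α : ℂ` the function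
`|cos²(θ/2) - α|` is `|z² + (2 - 4α) z + 1| / 4`, the modulus of a quadratic polynomial in `z`;
likewise a linear polynomial nonnegative on `[0,1]` is `|a + b z|²` for suitable real `a, b`.
A polynomial `P ≥ 0` on `[0,1]` of positive degree has a factor of one of these shapes: `x - r`
or `r - x` for a real root outside `(0,1)`, `(x - r)²` for a root inside (it is a local minimum),
or `|x - α|²` for a non-real root. The cofactor is still nonnegative on `[0,1]`, and induction on
the degree concludes, since the representations multiply.
-/

open Complex Polynomial

theorem exp_I_mul_add_one_sq (θ : ℝ) :
    (exp (I * θ) + 1) ^ 2 = 4 * (Real.cos (θ / 2) : ℂ) ^ 2 * exp (I * θ) := by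
  set w := exp ((θ / 2 : ℝ) * I)
  set w' := exp (-(θ / 2 : ℝ) * I)
  have hw : exp (I * θ) = w ^ 2 := by
    rw [← exp_nat_mul]; congr 1; push_cast; ring
  have hinv : w * w' = 1 := by
    rw [← exp_add]; simp
  rw [hw, ofReal_cos]
  linear_combination (-(w ^ 2 + 1 + (w + w') * w)) * hinv
    - (2 * cos (θ / 2 : ℝ) + w + w') * w ^ 2 * two_cos (θ / 2 : ℝ)

theorem norm_add_mul_exp_I_mul_sq (a b θ : ℝ) :
    ‖(a : ℂ) + b * exp (I * θ)‖ ^ 2 = (a - b) ^ 2 + 4 * a * b * Real.cos (θ / 2) ^ 2 := by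
  have hcoords : (a : ℂ) + b * exp (I * θ)
      = ((a + b * Real.cos θ : ℝ) : ℂ) + ((b * Real.sin θ : ℝ) : ℂ) * I := by
    rw [mul_comm I, exp_mul_I]; push_cast; ring
  rw [hcoords, Complex.sq_norm, normSq_add_mul_I, Real.cos_sq, show 2 * (θ / 2) = θ by ring]
  linear_combination b ^ 2 * Real.sin_sq_add_cos_sq θ

theorem eval_quadratic_eq_norm_sub_sq (z : ℂ) (x : ℝ) :
    (X ^ 2 - C (2 * z.re) * X + C (‖z‖ ^ 2) : ℝ[X]).eval x = ‖(x : ℂ) - z‖ ^ 2 := by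
  simp only [eval_add, eval_sub, eval_mul, eval_pow, eval_C, eval_X, Complex.sq_norm,
    normSq_apply, sub_re, sub_im, ofReal_re, ofReal_im]
  ring

-- The roots of `q` are finite, so `p ≥ 0` on a dense subset of `[a, b]`.
theorem eval_nonneg_of_mul {a b : ℝ} (hab : a < b) {q p : ℝ[X]} (hq0 : q ≠ 0)
    (hq : ∀ x ∈ Set.Icc a b, 0 ≤ q.eval x) (hqp : ∀ x ∈ Set.Icc a b, 0 ≤ (q * p).eval x) :
    ∀ x ∈ Set.Icc a b, 0 ≤ p.eval x := by
  have hdense : Set.Icc a b ⊆ closure (Set.Ioo a b ∩ {x | q.IsRoot x}ᶜ) := by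
    rw [← closure_Ioo hab.ne]
    exact closure_minimal (((finite_setOfPred_isRoot hq0).countable.dense_compl
      ℝ).open_subset_closure_inter isOpen_Ioo) isClosed_closure
  refine fun x hx => closure_minimal ?_ (isClosed_le continuous_const p.continuous) (hdense hx)
  rintro y ⟨hy, hqy⟩
  have hqpy := hqp y (Set.Ioo_subset_Icc_self hy)
  rw [eval_mul] at hqpy
  exact nonneg_of_mul_nonneg_right hqpy ((hq y (Set.Ioo_subset_Icc_self hy)).lt_of_ne' hqy)

theorem sq_X_sub_C_dvd_of_isLocalMin {P : ℝ[X]} (hP0 : P ≠ 0) {r : ℝ} (hr : P.IsRoot r)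
    (hmin : IsLocalMin (fun x => P.eval x) r) : (X - C r) ^ 2 ∣ P := by
  rw [← le_rootMultiplicity_iff hP0]
  exact (one_lt_rootMultiplicity_iff_isRoot hP0).2
    ⟨hr, by simpa [Polynomial.deriv] using hmin.deriv_eq_zero⟩

def HasFejerRieszFactor (P : ℝ[X]) (n : ℕ) : Prop :=
  ∃ Q : ℂ[X], Q.natDegree ≤ n ∧
    ∀ θ : ℝ, P.eval (Real.cos (θ / 2) ^ 2) = ‖Q.eval (exp (I * θ))‖ ^ 2

namespace HasFejerRieszFactor

theorem mono {P : ℝ[X]} {m n : ℕ} (hP : HasFejerRieszFactor P m) (hmn : m ≤ n) :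
    HasFejerRieszFactor P n :=
  let ⟨Q, hQ, hPQ⟩ := hP
  ⟨Q, hQ.trans hmn, hPQ⟩

theorem mul {P R : ℝ[X]} {m n : ℕ} (hP : HasFejerRieszFactor P m)
    (hR : HasFejerRieszFactor R n) : HasFejerRieszFactor (P * R) (m + n) := by
  obtain ⟨Q, hQ, hPQ⟩ := hP
  obtain ⟨S, hS, hRS⟩ := hR
  exact ⟨Q * S, natDegree_mul_le.trans (add_le_add hQ hS), fun θ => by
    rw [eval_mul, eval_mul, hPQ, hRS, norm_mul, mul_pow]⟩

theorem eval_nonneg {P : ℝ[X]} {n : ℕ} (hP : HasFejerRieszFactor P n) :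
    ∀ x ∈ Set.Icc (0 : ℝ) 1, 0 ≤ P.eval x := by
  obtain ⟨Q, -, hPQ⟩ := hP
  intro x hx
  have hcos : Real.cos (2 * Real.arccos √x / 2) ^ 2 = x := by
    rw [mul_div_cancel_left₀ _ two_ne_zero, Real.cos_arccos (by linarith [Real.sqrt_nonneg x])
      (Real.sqrt_le_one.2 hx.2), Real.sq_sqrt hx.1]
  rw [← hcos, hPQ]
  positivity

theorem of_natDegree_eq_zero {P : ℝ[X]} (hP : P.natDegree = 0) (h0 : 0 ≤ P.eval 0) :
    HasFejerRieszFactor P 0 := by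
  rw [eq_C_of_natDegree_eq_zero hP, eval_C] at *
  refine ⟨C (√(P.coeff 0) : ℂ), (natDegree_C _).le, fun θ => ?_⟩
  rw [eval_C, eval_C, norm_real, Real.norm_eq_abs, sq_abs, Real.sq_sqrt h0]

-- `‖a + b z‖² = (a - b)² + 4ab cos²(θ/2)`, so take `a - b = √P(0)` and `a + b = √P(1)`.
theorem of_natDegree_le_one {P : ℝ[X]} (hP : P.natDegree ≤ 1) (h0 : 0 ≤ P.eval 0)
    (h1 : 0 ≤ P.eval 1) : HasFejerRieszFactor P 1 := by
  set u := √(P.eval 1)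
  set v := √(P.eval 0)
  refine ⟨C (((u + v) / 2 : ℝ) : ℂ) + C (((u - v) / 2 : ℝ) : ℂ) * X, by compute_degree,
    fun θ => ?_⟩
  rw [eval_add, eval_mul, eval_C, eval_C, eval_X, norm_add_mul_exp_I_mul_sq]
  have hu : u ^ 2 = P.eval 1 := Real.sq_sqrt h1
  have hv : v ^ 2 = P.eval 0 := Real.sq_sqrt h0
  rw [eq_X_add_C_of_natDegree_le_one hP] at hu hv ⊢
  simp only [eval_add, eval_mul, eval_C, eval_X] at hu hv ⊢
  linear_combination (-(Real.cos (θ / 2) ^ 2)) * hu + (Real.cos (θ / 2) ^ 2 - 1) * hv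

theorem of_eval_eq_norm_sub_sq {q : ℝ[X]} (α : ℂ)
    (hq : ∀ x : ℝ, q.eval x = ‖(x : ℂ) - α‖ ^ 2) : HasFejerRieszFactor q 2 := by
  refine ⟨C (1 / 4 : ℂ) * (X ^ 2 + C (2 - 4 * α) * X + 1), by compute_degree, fun θ => ?_⟩
  have heval : (C (1 / 4 : ℂ) * (X ^ 2 + C (2 - 4 * α) * X + 1)).eval (exp (I * θ))
      = exp (I * θ) * (((Real.cos (θ / 2) ^ 2 : ℝ) : ℂ) - α) := by
    simp only [eval_mul, eval_add, eval_pow, eval_C, eval_X, eval_one]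
    rw [ofReal_pow]
    linear_combination (1 / 4 : ℂ) * exp_I_mul_add_one_sq θ
  rw [hq, heval, norm_mul, norm_exp_I_mul_ofReal, one_mul]

end HasFejerRieszFactor

theorem exists_dvd_hasFejerRieszFactor_of_isRoot {P : ℝ[X]} (hP0 : P ≠ 0)
    (hP : ∀ x ∈ Set.Icc (0 : ℝ) 1, 0 ≤ P.eval x) {r : ℝ} (hr : P.IsRoot r) :
    ∃ q : ℝ[X], q ∣ P ∧ 0 < q.natDegree ∧ HasFejerRieszFactor q q.natDegree := by
  rcases le_or_gt r 0 with hr0 | hr0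
  · refine ⟨X - C r, dvd_iff_isRoot.2 hr, by rw [natDegree_X_sub_C]; exact one_pos, ?_⟩
    rw [natDegree_X_sub_C]
    exact .of_natDegree_le_one (natDegree_X_sub_C r).le (by simp; linarith) (by simp; linarith)
  rcases le_or_gt 1 r with hr1 | hr1
  · have hdeg : (C r - X).natDegree = 1 := by compute_degree!
    refine ⟨C r - X, by rw [← neg_sub, neg_dvd]; exact dvd_iff_isRoot.2 hr, by omega, ?_⟩
    rw [hdeg]
    exact .of_natDegree_le_one hdeg.le (by simp; linarith) (by simp; linarith)
  · have hmin : IsLocalMin (fun x => P.eval x) r :=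
      Filter.eventually_of_mem (Icc_mem_nhds hr0 hr1) fun x hx => by
        simpa only [hr.eq_zero] using hP x hx
    have hdeg : ((X - C r) ^ 2).natDegree = 2 := by rw [natDegree_pow, natDegree_X_sub_C]
    refine ⟨(X - C r) ^ 2, sq_X_sub_C_dvd_of_isLocalMin hP0 hr hmin, by omega, ?_⟩
    rw [hdeg]
    refine .of_eval_eq_norm_sub_sq r fun x => ?_
    rw [← ofReal_sub, norm_real, Real.norm_eq_abs, sq_abs]
    simp

theorem exists_dvd_hasFejerRieszFactor {P : ℝ[X]} (hdeg : 0 < P.natDegree)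
    (hP : ∀ x ∈ Set.Icc (0 : ℝ) 1, 0 ≤ P.eval x) :
    ∃ q : ℝ[X], q ∣ P ∧ 0 < q.natDegree ∧ HasFejerRieszFactor q q.natDegree := by
  have hP0 : P ≠ 0 := ne_zero_of_natDegree_gt hdeg
  obtain ⟨α, hα⟩ :=
    IsAlgClosed.exists_aeval_eq_zero ℂ P (natDegree_pos_iff_degree_pos.1 hdeg).ne'
  by_cases him : α.im = 0
  · refine exists_dvd_hasFejerRieszFactor_of_isRoot hP0 hP (r := α.re) ?_
    have hαre : algebraMap ℝ ℂ (P.eval α.re) = 0 := by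
      rw [← aeval_algebraMap_apply_eq_algebraMap_eval, ← hα]
      congr
      exact ext (by simp) (by simp [him])
    exact (map_eq_zero_iff _ (algebraMap ℝ ℂ).injective).1 hαre
  · have hdeg : (X ^ 2 - C (2 * α.re) * X + C (‖α‖ ^ 2) : ℝ[X]).natDegree = 2 := by
      compute_degree!
    refine ⟨_, quadratic_dvd_of_aeval_eq_zero_im_ne_zero P hα him, by omega, ?_⟩
    rw [hdeg]
    exact .of_eval_eq_norm_sub_sq α (eval_quadratic_eq_norm_sub_sq α)

theorem hasFejerRieszFactor_of_nonneg (P : ℝ[X])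
    (hP : ∀ x ∈ Set.Icc (0 : ℝ) 1, 0 ≤ P.eval x) : HasFejerRieszFactor P P.natDegree := by
  induction hn : P.natDegree using Nat.strong_induction_on generalizing P with
  | _ n ih =>
  rcases Nat.eq_zero_or_pos n with rfl | hn0
  · exact .of_natDegree_eq_zero hn (hP 0 ⟨le_rfl, zero_le_one⟩)
  obtain ⟨q, ⟨R, rfl⟩, hq, hqR⟩ := exists_dvd_hasFejerRieszFactor (hn ▸ hn0) hP
  have hqR0 : q * R ≠ 0 := ne_zero_of_natDegree_gt (hn ▸ hn0)
  have hdeg : (q * R).natDegree = q.natDegree + R.natDegree :=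
    natDegree_mul (left_ne_zero_of_mul hqR0) (right_ne_zero_of_mul hqR0)
  have hR := ih R.natDegree (by omega) R
    (eval_nonneg_of_mul zero_lt_one (left_ne_zero_of_mul hqR0) hqR.eval_nonneg hP) rfl
  rw [← hn, hdeg]
  exact hqR.mul hR

/-- Fejér–Riesz: a real polynomial `P` of degree `≤ N`, nonnegative on `[0,1]`, can be
written as `P(cos²(θ/2)) = |Σ_{k=0}^{N} A_k e^{ikθ}|²`. -/
theorem stmt_13 (N : ℕ) (P : Polynomial ℝ) (hdeg : P.natDegree ≤ N)
    (hpos : ∀ x ∈ Set.Icc (0 : ℝ) 1, 0 ≤ P.eval x) :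
    ∃ A : Fin (N + 1) → ℂ, ∀ θ : ℝ,
      P.eval (Real.cos (θ / 2) ^ 2) =
        ‖∑ k : Fin (N + 1), A k * Complex.exp (Complex.I * (k : ℕ) * θ)‖ ^ 2 := by
  obtain ⟨Q, hQ, hPQ⟩ := (hasFejerRieszFactor_of_nonneg P hpos).mono hdeg
  refine ⟨fun k => Q.coeff k, fun θ => ?_⟩
  have hsum : Q.eval (exp (I * θ)) = ∑ k : Fin (N + 1), Q.coeff k * exp (I * (k : ℕ) * θ) := by
    rw [eval_eq_sum_range' (Nat.lt_succ_of_le hQ), ← Fin.sum_univ_eq_sum_range]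
    refine Finset.sum_congr rfl fun k _ => ?_
    rw [← exp_nat_mul, mul_left_comm, mul_assoc]
  rw [hPQ, hsum]
end

section
/- Let U and V be unitary operators on H_a ⊗ H and H_b ⊗ H respectively that are block encodings of operators A and B on H, i.e., (⟨0_a| ⊗ I) U (|0_a⟩ ⊗ I) = A and (⟨0_b| ⊗ I) V (|0_b⟩ ⊗ I) = B. Then (I_b ⊗ U)(I_a ⊗ V), suitably interpreted as an operator on H_a ⊗ H_b ⊗ H, is a block encoding of AB: projecting the combined ancilla onto |0_a⟩|0_b⟩ yields AB. -/
open Matrix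

/-- Each factor acts as the identity on the other's ancilla, so only the intermediate indices
`(a, b, k)` contribute to the sum. -/
theorem ancilla_diag_block_mul_apply {α β ι R : Type*} [Fintype α] [Fintype β] [Fintype ι]
    [DecidableEq α] [DecidableEq β] [NonUnitalNonAssocSemiring R]
    (U : Matrix (α × ι) (α × ι) R) (V : Matrix (β × ι) (β × ι) R) (a : α) (b : β) (i j : ι) :
    ((Matrix.of fun (x y : α × β × ι) => if x.2.1 = y.2.1 then U (x.1, x.2.2) (y.1, y.2.2) else 0) *
      (Matrix.of fun (x y : α × β × ι) => if x.1 = y.1 then V (x.2.1, x.2.2) (y.2.1, y.2.2) else 0))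
        (a, b, i) (a, b, j) =
      ∑ k, U (a, i) (a, k) * V (b, k) (b, j) := by
  simp only [mul_apply, of_apply, Fintype.sum_prod_type, ite_mul, mul_ite, zero_mul, mul_zero]
  simp [Finset.sum_ite_eq, eq_comm]

theorem stmt_16_general {p q n : ℕ}
    (U : Matrix (Fin (p + 1) × Fin n) (Fin (p + 1) × Fin n) ℂ)
    (V : Matrix (Fin (q + 1) × Fin n) (Fin (q + 1) × Fin n) ℂ)
    (A B : Matrix (Fin n) (Fin n) ℂ)
    (hA : ∀ i j, A i j = U (0, i) (0, j))
    (hB : ∀ i j, B i j = V (0, i) (0, j)) :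
    ∀ i j : Fin n,
      ((Matrix.of (fun (x y : Fin (p + 1) × Fin (q + 1) × Fin n) =>
          if x.2.1 = y.2.1 then U (x.1, x.2.2) (y.1, y.2.2) else 0)) *
        (Matrix.of (fun (x y : Fin (p + 1) × Fin (q + 1) × Fin n) =>
          if x.1 = y.1 then V (x.2.1, x.2.2) (y.2.1, y.2.2) else 0)))
        (0, 0, i) (0, 0, j) = (A * B) i j := by
  intro i j
  rw [ancilla_diag_block_mul_apply, mul_apply]
  simp only [hA, hB]

/-- Product of block-encoded matrices: if `U` block-encodes `A` (ancilla `a`) and `V`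
block-encodes `B` (ancilla `b`), then `(I_b ⊗ U)(I_a ⊗ V)` block-encodes `AB` with respect
to the combined ancilla projector `|0_a 0_b⟩⟨0_a 0_b|`. -/
theorem stmt_16 {p q n : ℕ}
    (U : Matrix (Fin (p + 1) × Fin n) (Fin (p + 1) × Fin n) ℂ)
    (V : Matrix (Fin (q + 1) × Fin n) (Fin (q + 1) × Fin n) ℂ)
    (hU : U ∈ Matrix.unitaryGroup (Fin (p + 1) × Fin n) ℂ)
    (hV : V ∈ Matrix.unitaryGroup (Fin (q + 1) × Fin n) ℂ)
    (A B : Matrix (Fin n) (Fin n) ℂ)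
    (hA : ∀ i j, A i j = U (0, i) (0, j))
    (hB : ∀ i j, B i j = V (0, i) (0, j)) :
    ∀ i j : Fin n,
      ((Matrix.of (fun (x y : Fin (p + 1) × Fin (q + 1) × Fin n) =>
          if x.2.1 = y.2.1 then U (x.1, x.2.2) (y.1, y.2.2) else 0)) *
        (Matrix.of (fun (x y : Fin (p + 1) × Fin (q + 1) × Fin n) =>
          if x.1 = y.1 then V (x.2.1, x.2.2) (y.2.1, y.2.2) else 0)))
        (0, 0, i) (0, 0, j) = (A * B) i j :=
  stmt_16_general U V A B hA hB
end
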